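/- Let d ≥ 1, T > 0, and let p', q' ∈ (1, ∞) satisfy d/p' + 2/q' < 2. Then there exists a constant C > 0, depending only on T, d, p', q', such that for every Borel measurable function f : [0,T] × ℝ^d → [0, ∞) one has ∫_0^T (2πs)^{−d/2} ∫_{ℝ^d} f(s,z) e^{−|z|^2/(2s)} dz ds ≤ C · ( ∫_0^T ( ∫_{ℝ^d} f(s,z)^{p'} dz )^{q'/p'} ds )^{1/q'}. -/

import Mathlib

open MeasureTheory ProbabilityTheory Filter
open scoped ENNReal NNReal Topology

noncomputable section

/-- `Euc d` is `ℝ^d` with the Euclidean norm. -/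
abbrev Euc (d : ℕ) := EuclideanSpace ℝ (Fin d)

/-- `B` is a `d`-dimensional Brownian motion on `[0,T]` with respect to `μ`:
continuous paths, `B 0 = 0`, and for any monotone family of times in `[0,T]` the
coordinates of the increments are independent, each increment coordinate being
a centered Gaussian of variance `t - s`. -/
def IsBrownianMotion {Ω : Type*} [MeasurableSpace Ω] (μ : Measure Ω) (d : ℕ) (T : ℝ)
    (B : ℝ → Ω → Euc d) : Prop :=
  (∀ ω, ContinuousOn (fun t => B t ω) (Set.Icc 0 T)) ∧
  (∀ ω, B 0 ω = 0) ∧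
  (∀ t, Measurable (B t)) ∧
  (∀ (n : ℕ) (t : Fin (n + 1) → ℝ), Monotone t → (∀ i, t i ∈ Set.Icc (0 : ℝ) T) →
    iIndepFun
      (fun p : Fin n × Fin d => fun ω =>
        (B (t p.1.succ) ω - B (t p.1.castSucc) ω) p.2) μ) ∧
  (∀ s t : ℝ, 0 ≤ s → s ≤ t → t ≤ T → ∀ i : Fin d,
    μ.map (fun ω => (B t ω - B s ω) i) = gaussianReal 0 (Real.toNNReal (t - s)))

/-- The mixed norm `‖f‖_{L^q_p}` (as an extended nonnegative real). -/
def mixedNorm (d : ℕ) (T p q : ℝ) (f : ℝ → Euc d → Euc d) : ℝ≥0∞ :=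
  (∫⁻ t in Set.Ioc (0 : ℝ) T,
      (∫⁻ x : Euc d, ENNReal.ofReal (‖f t x‖ ^ p)) ^ (q / p)) ^ (1 / q)

/-- The `μ`-augmented natural filtration of `B` at time `t`. -/
def augFiltration {Ω : Type*} [MeasurableSpace Ω] (μ : Measure Ω) {d : ℕ}
    (B : ℝ → Ω → Euc d) (t : ℝ) : MeasurableSpace Ω :=
  (⨆ s ∈ Set.Icc (0 : ℝ) t, MeasurableSpace.comap (B s) inferInstance) ⊔
    MeasurableSpace.generateFrom {N : Set Ω | μ N = 0}

/-- `X` is a strong solution of `dX_t = b(t, X_t) dt + dB_t`, `X_0 = x`, on `[0,T]`: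
a continuous process, adapted to the `μ`-augmented natural filtration of `B`, such that
a.s. `∫_0^T |b(s,X_s)| ds < ∞` and `X_t = x + ∫_0^t b(s,X_s) ds + B_t` for all `t ∈ [0,T]`. -/
def IsStrongSolution {Ω : Type*} [MeasurableSpace Ω] (μ : Measure Ω) {d : ℕ} (T : ℝ)
    (B : ℝ → Ω → Euc d) (b : ℝ → Euc d → Euc d) (x : Euc d) (X : ℝ → Ω → Euc d) : Prop :=
  (∀ ω, ContinuousOn (fun t => X t ω) (Set.Icc 0 T)) ∧
  (∀ t ∈ Set.Icc (0 : ℝ) T, Measurable[augFiltration μ B t] (X t)) ∧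
  (∀ᵐ ω ∂μ, IntegrableOn (fun s => b s (X s ω)) (Set.Icc 0 T) ∧
    ∀ t ∈ Set.Icc (0 : ℝ) T,
      X t ω = x + (∫ s in Set.Icc (0 : ℝ) t, b s (X s ω)) + B t ω)


/-!
With `p`, `q` the conjugate exponents of `p'`, `q'` and `k_s` the heat kernel, Hölder's
inequality in space bounds `∫ k_s f(s, ·)` by `‖k_s‖_p ‖f(s, ·)‖_{p'}`, and a Gaussian integral
gives `‖k_s‖_p = c s^(-d/(2p'))`. Hölder's inequality in time then bounds the left-hand side by
`‖s ↦ ‖k_s‖_p‖_{L^q(0,T)}` times the mixed norm of `f`, and the first factor is finite because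
`s^(-dq/(2p'))` is integrable at `0` exactly when `d/p' + 2/q' < 2`.
-/

open Real Set Function

theorem lintegral_ofReal_exp_neg_mul_sq_norm {V : Type*} [NormedAddCommGroup V]
    [InnerProductSpace ℝ V] [FiniteDimensional ℝ V] [MeasurableSpace V] [BorelSpace V]
    {b : ℝ} (hb : 0 < b) :
    ∫⁻ v : V, ENNReal.ofReal (rexp (-b * ‖v‖ ^ 2))
      = ENNReal.ofReal ((π / b) ^ (Module.finrank ℝ V / 2 : ℝ)) := by
  have hval := GaussianFourier.integral_rexp_neg_mul_sq_norm (V := V) hb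
  rw [← ofReal_integral_eq_lintegral_ofReal, hval]
  · exact Integrable.of_integral_ne_zero (by rw [hval]; positivity)
  · exact ae_of_all _ fun v => (exp_pos _).le

theorem lintegral_lintegral_mul_le_mixed_Lp_mul_Lq {α β : Type*} [MeasurableSpace α]
    [MeasurableSpace β] {μ : Measure α} {ν : Measure β} [SFinite ν] {p p' q q' : ℝ}
    (hp : p.HolderConjugate p') (hq : q.HolderConjugate q') {K f : α → β → ℝ≥0∞}
    (hK : Measurable (uncurry K)) (hf : Measurable (uncurry f)) :
    ∫⁻ s, ∫⁻ z, K s z * f s z ∂ν ∂μ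
      ≤ (∫⁻ s, (∫⁻ z, K s z ^ p ∂ν) ^ (q / p) ∂μ) ^ (1 / q)
        * (∫⁻ s, (∫⁻ z, f s z ^ p' ∂ν) ^ (q' / p') ∂μ) ^ (1 / q') := by
  have measurable_norm {g : α → β → ℝ≥0∞} (hg : Measurable (uncurry g)) (r : ℝ) :
      Measurable fun s => (∫⁻ z, g s z ^ r ∂ν) ^ (1 / r) :=
    (hg.pow_const r).lintegral_prod_right'.pow_const _
  calc ∫⁻ s, ∫⁻ z, K s z * f s z ∂ν ∂μ
      ≤ ∫⁻ s, (∫⁻ z, K s z ^ p ∂ν) ^ (1 / p) * (∫⁻ z, f s z ^ p' ∂ν) ^ (1 / p') ∂μ :=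
        lintegral_mono fun s => ENNReal.lintegral_mul_le_Lp_mul_Lq ν hp
          hK.of_uncurry_left.aemeasurable hf.of_uncurry_left.aemeasurable
    _ ≤ (∫⁻ s, ((∫⁻ z, K s z ^ p ∂ν) ^ (1 / p)) ^ q ∂μ) ^ (1 / q)
        * (∫⁻ s, ((∫⁻ z, f s z ^ p' ∂ν) ^ (1 / p')) ^ q' ∂μ) ^ (1 / q') :=
        ENNReal.lintegral_mul_le_Lp_mul_Lq μ hq
          (measurable_norm hK p).aemeasurable (measurable_norm hf p').aemeasurable
    _ = _ := by simp only [← ENNReal.rpow_mul, one_div_mul_eq_div]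

section HeatKernel

variable (V : Type*) [NormedAddCommGroup V] [InnerProductSpace ℝ V]

def heatKernel (s : ℝ) (z : V) : ℝ :=
  (2 * π * s) ^ (-(Module.finrank ℝ V : ℝ) / 2) * rexp (-‖z‖ ^ 2 / (2 * s))

variable {V}

theorem heatKernel_nonneg {s : ℝ} (hs : 0 ≤ s) (z : V) : 0 ≤ heatKernel V s z := by
  unfold heatKernel; positivity

variable [MeasurableSpace V] [BorelSpace V]

theorem measurable_heatKernel : Measurable (uncurry (heatKernel V)) := by
  unfold heatKernel; fun_prop

variable [FiniteDimensional ℝ V]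

theorem lintegral_ofReal_heatKernel_rpow {s p : ℝ} (hs : 0 < s) (hp : 0 < p) :
    ∫⁻ z : V, ENNReal.ofReal (heatKernel V s z) ^ p
      = ENNReal.ofReal ((2 * π * s) ^ (-(Module.finrank ℝ V / 2 : ℝ) * (p - 1))
          / p ^ (Module.finrank ℝ V / 2 : ℝ)) := by
  have h2πs : 0 < 2 * π * s := by positivity
  have hpow (z : V) : ENNReal.ofReal (heatKernel V s z) ^ p
      = ENNReal.ofReal ((2 * π * s) ^ (-(Module.finrank ℝ V / 2 : ℝ) * p))
        * ENNReal.ofReal (rexp (-(p / (2 * s)) * ‖z‖ ^ 2)) := by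
    rw [ENNReal.ofReal_rpow_of_nonneg (heatKernel_nonneg hs.le z) hp.le,
      ← ENNReal.ofReal_mul (by positivity), heatKernel,
      mul_rpow (by positivity) (exp_pos _).le, ← exp_mul, ← rpow_mul h2πs.le]
    congr 3 <;> ring
  simp_rw [hpow]
  rw [lintegral_const_mul' _ _ ENNReal.ofReal_ne_top,
    lintegral_ofReal_exp_neg_mul_sq_norm (by positivity), ← ENNReal.ofReal_mul (by positivity)]
  congr 1
  rw [show π / (p / (2 * s)) = 2 * π * s / p by field_simp, div_rpow h2πs.le hp.le,
    mul_div_assoc', ← rpow_add h2πs]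
  ring_nf

theorem lintegral_Ioc_lintegral_heatKernel_rpow_lt_top (T : ℝ) {p p' q q' : ℝ}
    (hp : p.HolderConjugate p') (hq : q.HolderConjugate q')
    (hpq : (Module.finrank ℝ V : ℝ) / p' + 2 / q' < 2) :
    ∫⁻ s in Ioc 0 T, (∫⁻ z : V, ENNReal.ofReal (heatKernel V s z) ^ p) ^ (q / p) < ⊤ := by
  set n : ℝ := (Module.finrank ℝ V : ℝ)
  set r : ℝ := -(n / 2) * (p - 1) * (q / p)
  have hp0 := hp.pos
  have hq0 := hq.pos
  have hr : -1 < r := by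
    have h1 := hp.inv_add_inv_eq_one
    have h2 := hq.inv_add_inv_eq_one
    have hlt : n * p'⁻¹ * q < 2 := calc
      n * p'⁻¹ * q < 2 * q⁻¹ * q := by
        refine mul_lt_mul_of_pos_right ?_ hq0
        rw [div_eq_mul_inv, div_eq_mul_inv] at hpq; linarith
      _ = 2 := by field_simp
    have hr_eq : r = -(n * p'⁻¹ * q) / 2 := by
      rw [show p'⁻¹ = 1 - p⁻¹ by linarith]; simp only [r]; field_simp
    linarith
  have hint : IntegrableOn (fun s => (2 * π) ^ r / p ^ (n / 2 * (q / p)) * s ^ r) (Ioc 0 T) := by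
    have h := intervalIntegral.intervalIntegrable_rpow' hr (a := 0) (b := T)
    rw [intervalIntegrable_iff] at h
    exact (h.mono_set Ioc_subset_uIoc).const_mul _
  refine lt_of_eq_of_lt (setLIntegral_congr_fun measurableSet_Ioc fun s hs => ?_)
    hint.setLIntegral_lt_top
  have hs := hs.1
  rw [lintegral_ofReal_heatKernel_rpow hs hp0,
    ENNReal.ofReal_rpow_of_nonneg (by positivity) (by positivity)]
  congr 1
  have h2πs : 0 < 2 * π * s := by positivity
  rw [div_rpow (by positivity) (by positivity), ← rpow_mul h2πs.le, ← rpow_mul hp0.le,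
    mul_rpow two_pi_pos.le hs.le]
  simp only [r, n]
  ring_nf

end HeatKernel

theorem heat_kernel_mixed_norm_bound_general
    (d : ℕ) (T : ℝ)
    (p' q' : ℝ) (hp : 1 < p') (hq : 1 < q') (hpq : (d : ℝ) / p' + 2 / q' < 2) :
    ∃ C : ℝ, 0 < C ∧
      ∀ f : ℝ → Euc d → ℝ, Measurable (Function.uncurry f) →
        (∀ s z, 0 ≤ f s z) →
        ∫⁻ s in Set.Ioc (0 : ℝ) T, ∫⁻ z : Euc d,
            ENNReal.ofReal
              ((2 * Real.pi * s) ^ (-(d : ℝ) / 2) * f s z *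
                Real.exp (-‖z‖ ^ 2 / (2 * s)))
          ≤ ENNReal.ofReal C *
            (∫⁻ s in Set.Ioc (0 : ℝ) T,
                (∫⁻ z : Euc d, ENNReal.ofReal (f s z ^ p')) ^ (q' / p')) ^ (1 / q') := by
  set p := p'.conjExponent
  set q := q'.conjExponent
  have hpp : p.HolderConjugate p' := (Real.HolderConjugate.conjExponent hp).symm
  have hqq : q.HolderConjugate q' := (Real.HolderConjugate.conjExponent hq).symm
  set E := (∫⁻ s in Ioc 0 T,
    (∫⁻ z : Euc d, ENNReal.ofReal (heatKernel (Euc d) s z) ^ p) ^ (q / p)) ^ (1 / q)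
  have hE : E ≠ ⊤ := (ENNReal.rpow_lt_top_of_nonneg (by simp [hqq.pos.le])
    (lintegral_Ioc_lintegral_heatKernel_rpow_lt_top T hpp hqq (by simpa using hpq)).ne).ne
  refine ⟨E.toReal + 1, by positivity, fun f hf hf0 => ?_⟩
  calc _ = ∫⁻ s in Ioc 0 T, ∫⁻ z : Euc d,
        ENNReal.ofReal (heatKernel (Euc d) s z) * ENNReal.ofReal (f s z) := by
        refine setLIntegral_congr_fun measurableSet_Ioc fun s hs => lintegral_congr fun z => ?_
        rw [← ENNReal.ofReal_mul (heatKernel_nonneg hs.1.le z), heatKernel,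
          finrank_euclideanSpace_fin, mul_right_comm]
    _ ≤ E * (∫⁻ s in Ioc 0 T,
          (∫⁻ z : Euc d, ENNReal.ofReal (f s z) ^ p') ^ (q' / p')) ^ (1 / q') :=
        lintegral_lintegral_mul_le_mixed_Lp_mul_Lq hpp hqq measurable_heatKernel.ennreal_ofReal
          hf.ennreal_ofReal
    _ ≤ _ := by
        gcongr
        · exact (ENNReal.ofReal_toReal hE).symm.trans_le (ENNReal.ofReal_le_ofReal (by linarith))
        · exact (ENNReal.ofReal_rpow_of_nonneg (hf0 _ _) (by linarith)).le

/-- the time-integrated heat-kernel integral of a nonnegative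
measurable `f` is bounded by a constant times its mixed `L^{q'}_{p'}` norm,
whenever `p', q' ∈ (1,∞)` satisfy `d/p' + 2/q' < 2`. -/
theorem heat_kernel_mixed_norm_bound
    (d : ℕ) (hd : 1 ≤ d) (T : ℝ) (hT : 0 < T)
    (p' q' : ℝ) (hp : 1 < p') (hq : 1 < q') (hpq : (d : ℝ) / p' + 2 / q' < 2) :
    ∃ C : ℝ, 0 < C ∧
      ∀ f : ℝ → Euc d → ℝ, Measurable (Function.uncurry f) →
        (∀ s z, 0 ≤ f s z) →
        ∫⁻ s in Set.Ioc (0 : ℝ) T, ∫⁻ z : Euc d,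
            ENNReal.ofReal
              ((2 * Real.pi * s) ^ (-(d : ℝ) / 2) * f s z *
                Real.exp (-‖z‖ ^ 2 / (2 * s)))
          ≤ ENNReal.ofReal C *
            (∫⁻ s in Set.Ioc (0 : ℝ) T,
                (∫⁻ z : Euc d, ENNReal.ofReal (f s z ^ p')) ^ (q' / p')) ^ (1 / q') :=
  heat_kernel_mixed_norm_bound_general d T p' q' hp hq hpq
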